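/- Let x⁰ ∈ ℝ^m have support I with IC(x⁰) < 1, let y = Ax⁰ + b with ‖b‖₂ ≤ ε, and let x⋆ minimize ‖x‖₁ subject to ‖Ax − y‖₂ ≤ ε. Then ‖x⋆ − x⁰‖₂ ≤ 2ε ( √(‖(A_IᵗA_I)⁻¹‖₂) + (‖d(x⁰)‖₂/(1 − IC(x⁰))) ( √(‖(A_IᵗA_I)⁻¹‖₂) · ‖A_{I^c}‖_{1→2} + 1 ) ). -/

import Mathlib

open Finset Matrix

/-- ℓ¹ norm of a finitely-indexed real vector. -/
noncomputable def l1 {ι : Type*} [Fintype ι] (x : ι → ℝ) : ℝ := ∑ i, |x i|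

/-- ℓ² (Euclidean) norm. -/
noncomputable def l2 {ι : Type*} [Fintype ι] (x : ι → ℝ) : ℝ := Real.sqrt (∑ i, (x i) ^ 2)

/-- ℓ^∞ norm. -/
noncomputable def linf {ι : Type*} [Fintype ι] (x : ι → ℝ) : ℝ := sSup {y | ∃ i, y = |x i|}

/-- Operator norm induced by the Euclidean norms (spectral norm). -/
noncomputable def opNorm2 {ι κ : Type*} [Fintype ι] [Fintype κ] (M : Matrix ι κ ℝ) : ℝ :=
  sSup {y | ∃ x : κ → ℝ, l2 x ≤ 1 ∧ y = l2 (M.mulVec x)}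

/-- Operator norm from ℓ¹ to ℓ². -/
noncomputable def norm12 {ι κ : Type*} [Fintype ι] [Fintype κ] (M : Matrix ι κ ℝ) : ℝ :=
  sSup {y | ∃ x : κ → ℝ, x ≠ 0 ∧ y = l2 (M.mulVec x) / l1 x}

/-- Submatrix of the columns of `A` indexed by `I`. -/
def colSub {n m : ℕ} (A : Matrix (Fin n) (Fin m) ℝ) (I : Finset (Fin m)) :
    Matrix (Fin n) {j // j ∈ I} ℝ := fun i j => A i j

/-- The Gram matrix `A_Iᵗ A_I`. -/
def gram {n m : ℕ} (A : Matrix (Fin n) (Fin m) ℝ) (I : Finset (Fin m)) :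
    Matrix {j // j ∈ I} {j // j ∈ I} ℝ := (colSub A I)ᵀ * colSub A I

/-- The sign vector of `x` restricted to `I`. -/
noncomputable def signI {m : ℕ} (x : Fin m → ℝ) (I : Finset (Fin m)) : {j // j ∈ I} → ℝ :=
  fun j => Real.sign (x j)

/-- The vector `d(x) = A_I (A_IᵗA_I)⁻¹ sign(x_I)`. -/
noncomputable def dvec {n m : ℕ} (A : Matrix (Fin n) (Fin m) ℝ) (I : Finset (Fin m))
    (x : Fin m → ℝ) : Fin n → ℝ :=
  (colSub A I).mulVec ((gram A I)⁻¹.mulVec (signI x I))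

/-- The identification coefficient `IC(x) = max_{j ∉ I} |a_jᵗ d(x)|`. -/
noncomputable def IC {n m : ℕ} (A : Matrix (Fin n) (Fin m) ℝ) (I : Finset (Fin m))
    (x : Fin m → ℝ) : ℝ :=
  sSup {y | ∃ j ∉ I, y = |∑ i, A i j * dvec A I x i|}

/-- Restriction of `x` to `I`, extended by zero. -/
def restr {m : ℕ} (I : Finset (Fin m)) (x : Fin m → ℝ) : Fin m → ℝ :=
  fun i => if i ∈ I then x i else 0

/-!
Write `e = x⋆ - x⁰`. Both `x⋆` and `x⁰` are feasible, so `‖Ae‖₂ ≤ 2ε` and `‖x⋆‖₁ ≤ ‖x⁰‖₁`.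
The vector `g = Aᵗd(x⁰)` equals `sign x⁰` on `I` and is bounded by `IC(x⁰)` off `I`, so the
subgradient inequality of `‖·‖₁` at `x⁰` gives `(1 - IC) ‖e_{Iᶜ}‖₁ ≤ -⟨g, e⟩ = -⟨d, Ae⟩ ≤ 2ε‖d‖₂`.
On the support, `e_I = (A_IᵗA_I)⁻¹A_Iᵗ (Ae - A_{Iᶜ}e_{Iᶜ})`, and by the C*-identity this
pseudo-inverse has spectral norm `√‖(A_IᵗA_I)⁻¹‖₂`. Adding `‖e_I‖₂` and `‖e_{Iᶜ}‖₂ ≤ ‖e_{Iᶜ}‖₁`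
gives the bound.
-/

open scoped Matrix.Norms.L2Operator

section Norms

variable {ι κ : Type*} [Fintype ι] [Fintype κ]

lemma l2_eq_norm_toLp (x : ι → ℝ) : l2 x = ‖WithLp.toLp 2 x‖ := by
  simp [l2, EuclideanSpace.norm_eq]

lemma l2_nonneg (x : ι → ℝ) : 0 ≤ l2 x := Real.sqrt_nonneg _

lemma sq_l2 (x : ι → ℝ) : l2 x ^ 2 = ∑ i, x i ^ 2 :=
  Real.sq_sqrt (Finset.sum_nonneg fun _ _ => sq_nonneg _)

lemma l2_neg (x : ι → ℝ) : l2 (-x) = l2 x := by simp [l2]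

lemma l2_add_le (x y : ι → ℝ) : l2 (x + y) ≤ l2 x + l2 y := by
  simpa only [l2_eq_norm_toLp, WithLp.toLp_add] using norm_add_le _ _

lemma l2_sub_le (x y : ι → ℝ) : l2 (x - y) ≤ l2 x + l2 y := by
  simpa only [l2_eq_norm_toLp, WithLp.toLp_sub] using norm_sub_le _ _

lemma abs_dotProduct_le_l2_mul_l2 (x y : ι → ℝ) : |x ⬝ᵥ y| ≤ l2 x * l2 y := by
  have h := abs_real_inner_le_norm (WithLp.toLp 2 x) (WithLp.toLp 2 y)
  rwa [← l2_eq_norm_toLp, ← l2_eq_norm_toLp, EuclideanSpace.inner_eq_star_dotProduct,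
    dotProduct_comm] at h

lemma l2_le_l2_subtype_add_l2_subtype_compl [DecidableEq ι] (x : ι → ℝ) (I : Finset ι) :
    l2 x ≤ l2 (fun j : I => x j) + l2 (fun j : ↥Iᶜ => x j) := by
  have hsplit : l2 x ^ 2 = l2 (fun j : I => x j) ^ 2 + l2 (fun j : ↥Iᶜ => x j) ^ 2 := by
    simp only [sq_l2]
    rw [Finset.sum_coe_sort I (fun j => x j ^ 2), Finset.sum_coe_sort Iᶜ (fun j => x j ^ 2),
      Finset.sum_add_sum_compl]
  nlinarith [l2_nonneg x, l2_nonneg (fun j : I => x j), l2_nonneg (fun j : ↥Iᶜ => x j)]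

lemma l1_pos {x : ι → ℝ} (hx : x ≠ 0) : 0 < l1 x := by
  obtain ⟨i, hi⟩ := Function.ne_iff.1 hx
  exact Finset.sum_pos' (fun j _ => abs_nonneg _) ⟨i, Finset.mem_univ i, abs_pos.2 hi⟩

lemma l2_le_l1 (x : ι → ℝ) : l2 x ≤ l1 x := by
  refine (Real.sqrt_le_left (Finset.sum_nonneg fun _ _ => abs_nonneg _)).2 ?_
  simpa only [sq_abs] using Finset.sum_sq_le_sq_sum_of_nonneg (fun i _ => abs_nonneg (x i))

lemma l2_mulVec_le_l2_opNorm [DecidableEq κ] (M : Matrix ι κ ℝ) (x : κ → ℝ) :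
    l2 (M *ᵥ x) ≤ ‖M‖ * l2 x := by
  rw [l2_eq_norm_toLp, l2_eq_norm_toLp]
  exact M.l2_opNorm_mulVec (WithLp.toLp 2 x)

lemma opNorm2_eq_l2_opNorm [DecidableEq κ] (M : Matrix ι κ ℝ) : opNorm2 M = ‖M‖ := by
  rw [Matrix.l2_opNorm_def, ← ContinuousLinearMap.sSup_unitClosedBall_eq_norm, opNorm2]
  congr 1
  ext y
  simp only [Set.mem_image, Metric.mem_closedBall, dist_zero_right]
  constructor
  · rintro ⟨x, hx, rfl⟩
    exact ⟨WithLp.toLp 2 x, by rwa [← l2_eq_norm_toLp], by rw [l2_eq_norm_toLp]; rfl⟩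
  · rintro ⟨x, hx, rfl⟩
    exact ⟨x.ofLp, by rwa [l2_eq_norm_toLp], by rw [l2_eq_norm_toLp]; rfl⟩

lemma l2_mulVec_le_norm12 (M : Matrix ι κ ℝ) (x : κ → ℝ) :
    l2 (M *ᵥ x) ≤ norm12 M * l1 x := by
  classical
  rcases eq_or_ne x 0 with rfl | hx
  · simp [l2, l1]
  have hbdd : BddAbove {y | ∃ x : κ → ℝ, x ≠ 0 ∧ y = l2 (M *ᵥ x) / l1 x} := by
    refine ⟨‖M‖, ?_⟩
    rintro - ⟨x, hx, rfl⟩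
    rw [div_le_iff₀ (l1_pos hx)]
    exact (l2_mulVec_le_l2_opNorm M x).trans (by gcongr; exact l2_le_l1 x)
  rw [← div_le_iff₀ (l1_pos hx)]
  exact le_csSup hbdd ⟨x, hx, rfl⟩

lemma norm12_nonneg (M : Matrix ι κ ℝ) : 0 ≤ norm12 M := by
  apply Real.sSup_nonneg
  rintro - ⟨x, -, rfl⟩
  exact div_nonneg (l2_nonneg _) (Finset.sum_nonneg fun _ _ => abs_nonneg _)

lemma l2_opNorm_gram_inv_mul_transpose [DecidableEq ι] [DecidableEq κ] (B : Matrix ι κ ℝ)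
    (h : IsUnit (Bᵀ * B).det) : ‖(Bᵀ * B)⁻¹ * Bᵀ‖ = √‖(Bᵀ * B)⁻¹‖ := by
  set C := (Bᵀ * B)⁻¹ * Bᵀ
  have hCCt : C * Cᵀ = (Bᵀ * B)⁻¹ := by
    have hsymm : (Bᵀ * B)⁻¹ᵀ = (Bᵀ * B)⁻¹ := by
      rw [Matrix.transpose_nonsing_inv, Matrix.transpose_mul, Matrix.transpose_transpose]
    rw [Matrix.transpose_mul, hsymm, Matrix.transpose_transpose, Matrix.mul_assoc,
      ← Matrix.mul_assoc Bᵀ, ← Matrix.mul_assoc, Matrix.nonsing_inv_mul _ h, Matrix.one_mul]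
  have hCt := Matrix.l2_opNorm_conjTranspose_mul_self Cᴴ
  rw [Matrix.conjTranspose_conjTranspose, Matrix.l2_opNorm_conjTranspose,
    Matrix.conjTranspose_eq_transpose_of_trivial, hCCt] at hCt
  rw [hCt, Real.sqrt_mul_self (norm_nonneg _)]

end Norms

lemma Real.sign_mul_sub_le_abs_sub_abs (r s : ℝ) : Real.sign r * (s - r) ≤ |s| - |r| := by
  rcases lt_trichotomy r 0 with h | rfl | h
  · rw [Real.sign_of_neg h, abs_of_neg h]
    linarith [neg_abs_le s]
  · simp
  · rw [Real.sign_of_pos h, abs_of_pos h]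
    linarith [le_abs_self s]

lemma dotProduct_sub_add_sum_compl_le_l1_sub_l1 {ι : Type*} [Fintype ι] [DecidableEq ι]
    {g x₀ x : ι → ℝ} {I : Finset ι} {t : ℝ} (hx₀ : ∀ j ∉ I, x₀ j = 0)
    (hg : ∀ j ∈ I, g j = Real.sign (x₀ j)) (hgc : ∀ j ∉ I, |g j| ≤ t) :
    g ⬝ᵥ (x - x₀) + (1 - t) * ∑ j ∈ Iᶜ, |(x - x₀) j| ≤ l1 x - l1 x₀ := by
  rw [l1, l1, ← Finset.sum_sub_distrib, dotProduct, ← Finset.sum_add_sum_compl I,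
    ← Finset.sum_add_sum_compl I (fun j => |x j| - |x₀ j|), add_assoc, Finset.mul_sum,
    ← Finset.sum_add_distrib]
  refine add_le_add (Finset.sum_le_sum fun j hj => ?_) (Finset.sum_le_sum fun j hj => ?_)
  · rw [Pi.sub_apply, hg j hj]
    exact Real.sign_mul_sub_le_abs_sub_abs _ _
  · have hj' := Finset.mem_compl.1 hj
    have hgx : g j * x j ≤ t * |x j| := (le_abs_self _).trans <| by
      rw [abs_mul]; exact mul_le_mul_of_nonneg_right (hgc j hj') (abs_nonneg _)
    rw [Pi.sub_apply, hx₀ j hj', sub_zero, abs_zero, sub_zero]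
    linarith

section Support

variable {n m : ℕ} (A : Matrix (Fin n) (Fin m) ℝ) (I : Finset (Fin m))

lemma colSub_mulVec_add_colSub_compl_mulVec (x : Fin m → ℝ) :
    colSub A I *ᵥ (fun j : I => x j) + colSub A Iᶜ *ᵥ (fun j : ↥Iᶜ => x j) = A *ᵥ x := by
  funext i
  simp only [Pi.add_apply, Matrix.mulVec, dotProduct, colSub]
  rw [Finset.sum_coe_sort I (fun j => A i j * x j),
    Finset.sum_coe_sort Iᶜ (fun j => A i j * x j), Finset.sum_add_sum_compl]

lemma l2_le_of_isUnit_det_gram (hinv : IsUnit (gram A I).det) (e : Fin m → ℝ) :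
    l2 e ≤ √(opNorm2 (gram A I)⁻¹) *
        (l2 (A *ᵥ e) + norm12 (colSub A Iᶜ) * l1 (fun j : ↥Iᶜ => e j)) +
      l1 (fun j : ↥Iᶜ => e j) := by
  set eI : I → ℝ := fun j => e j
  set ec : ↥Iᶜ → ℝ := fun j => e j
  have heI : eI = ((gram A I)⁻¹ * (colSub A I)ᵀ) *ᵥ (A *ᵥ e - colSub A Iᶜ *ᵥ ec) := by
    rw [← colSub_mulVec_add_colSub_compl_mulVec A I e, add_sub_cancel_right,
      Matrix.mulVec_mulVec, Matrix.mul_assoc, ← _root_.gram, Matrix.nonsing_inv_mul _ hinv,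
      Matrix.one_mulVec]
  calc l2 e ≤ l2 eI + l2 ec := l2_le_l2_subtype_add_l2_subtype_compl e I
    _ ≤ √(opNorm2 (gram A I)⁻¹) * (l2 (A *ᵥ e) + norm12 (colSub A Iᶜ) * l1 ec) + l1 ec := by
      gcongr ?_ + ?_
      · rw [heI, opNorm2_eq_l2_opNorm, _root_.gram, ← l2_opNorm_gram_inv_mul_transpose _ hinv]
        refine (l2_mulVec_le_l2_opNorm _ _).trans ?_
        gcongr
        exact (l2_sub_le _ _).trans (by gcongr; exact l2_mulVec_le_norm12 _ _)
      · exact l2_le_l1 ec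

lemma transpose_mulVec_dvec_of_mem (hinv : IsUnit (gram A I).det) (x : Fin m → ℝ) {j : Fin m}
    (hj : j ∈ I) : (Aᵀ *ᵥ dvec A I x) j = Real.sign (x j) := by
  have h : (colSub A I)ᵀ *ᵥ dvec A I x = signI x I := by
    rw [dvec, Matrix.mulVec_mulVec, Matrix.mulVec_mulVec, ← _root_.gram,
      Matrix.mul_nonsing_inv _ hinv, Matrix.one_mulVec]
  exact congrFun h ⟨j, hj⟩

lemma abs_transpose_mulVec_dvec_le_IC (x : Fin m → ℝ) {j : Fin m} (hj : j ∉ I) :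
    |(Aᵀ *ᵥ dvec A I x) j| ≤ IC A I x := by
  have hfin : {y | ∃ j ∉ I, y = |∑ i, A i j * dvec A I x i|}.Finite :=
    (Set.finite_range fun j => |∑ i, A i j * dvec A I x i|).subset <| by
      rintro - ⟨j, -, rfl⟩
      exact ⟨j, rfl⟩
  exact le_csSup hfin.bddAbove ⟨j, hj, rfl⟩

lemma one_sub_IC_mul_l1_le (hinv : IsUnit (gram A I).det) {x₀ x : Fin m → ℝ}
    (hx₀ : ∀ j ∉ I, x₀ j = 0) (hmin : l1 x ≤ l1 x₀) :
    (1 - IC A I x₀) * l1 (fun j : ↥Iᶜ => (x - x₀) j) ≤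
      l2 (dvec A I x₀) * l2 (A *ᵥ (x - x₀)) := by
  have key := dotProduct_sub_add_sum_compl_le_l1_sub_l1 (g := Aᵀ *ᵥ dvec A I x₀) (x := x) hx₀
    (fun j hj => transpose_mulVec_dvec_of_mem A I hinv x₀ hj)
    (fun j hj => abs_transpose_mulVec_dvec_le_IC A I x₀ hj)
  rw [Matrix.mulVec_transpose, ← Matrix.dotProduct_mulVec] at key
  rw [l1, Finset.sum_coe_sort Iᶜ fun j => |(x - x₀) j|]
  linarith [neg_abs_le (dvec A I x₀ ⬝ᵥ A *ᵥ (x - x₀)),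
    abs_dotProduct_le_l2_mul_l2 (dvec A I x₀) (A *ᵥ (x - x₀))]

end Support

/-- Proposition 1: ℓ² error bound for ℓ¹ minimizers when `IC(x⁰) < 1`. -/
theorem l2_error_bound {n m : ℕ} (A : Matrix (Fin n) (Fin m) ℝ)
    (x0 xs : Fin m → ℝ) (b y : Fin n → ℝ) (ε : ℝ)
    (I : Finset (Fin m)) (hI : ∀ i, i ∈ I ↔ x0 i ≠ 0)
    (hinv : IsUnit (gram A I).det) (hIC : IC A I x0 < 1)
    (hy : y = A.mulVec x0 + b) (hb : l2 b ≤ ε)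
    (hfeas : l2 (A.mulVec xs - y) ≤ ε)
    (hmin : ∀ x : Fin m → ℝ, l2 (A.mulVec x - y) ≤ ε → l1 xs ≤ l1 x) :
    l2 (xs - x0) ≤
      2 * ε * (Real.sqrt (opNorm2 ((gram A I)⁻¹)) +
        l2 (dvec A I x0) / (1 - IC A I x0) *
          (Real.sqrt (opNorm2 ((gram A I)⁻¹)) * norm12 (colSub A Iᶜ) + 1)) := by
  have hx0 : ∀ j ∉ I, x0 j = 0 := fun j hj => not_not.1 fun h => hj ((hI j).2 h)
  have hAe : l2 (A *ᵥ (xs - x0)) ≤ 2 * ε := by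
    have h : A *ᵥ (xs - x0) = (A *ᵥ xs - y) + b := by rw [hy, Matrix.mulVec_sub]; abel
    linarith [h ▸ l2_add_le (A *ᵥ xs - y) b]
  have hx0_feas : l2 (A *ᵥ x0 - y) ≤ ε := by rwa [hy, sub_add_cancel_left, l2_neg]
  set P := √(opNorm2 (gram A I)⁻¹)
  set ν := norm12 (colSub A Iᶜ)
  set c := l1 (fun j : ↥Iᶜ => (xs - x0) j)
  have hc : c ≤ 2 * ε * l2 (dvec A I x0) / (1 - IC A I x0) := by
    rw [le_div_iff₀ (sub_pos.2 hIC)]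
    nlinarith [one_sub_IC_mul_l1_le A I hinv hx0 (hmin x0 hx0_feas), l2_nonneg (dvec A I x0)]
  have hP : 0 ≤ P := Real.sqrt_nonneg _
  have hν : 0 ≤ ν := norm12_nonneg _
  calc l2 (xs - x0) ≤ P * (l2 (A *ᵥ (xs - x0)) + ν * c) + c :=
        l2_le_of_isUnit_det_gram A I hinv (xs - x0)
    _ ≤ 2 * ε * P + (P * ν + 1) * c := by nlinarith
    _ ≤ 2 * ε * P + (P * ν + 1) * (2 * ε * l2 (dvec A I x0) / (1 - IC A I x0)) := by
      gcongr
    _ = _ := by ring
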